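/- There exists a constant C > 0, depending only on d₁ and d₂, such that for every x ∈ ℝ^{d₁} × ℝ^{d₂}, every r > 0 and every κ ≥ 0, the Lebesgue measures of Grushin balls satisfy |B^ϱ(x, κ r)| ≤ C (1 + κ)^{Q} |B^ϱ(x, r)|, where Q = d₁ + 2 d₂ is the homogeneous dimension. -/

import Mathlib

/-! The Grushin ball `B(x, r)` is squeezed between the boxes
`closedBall x' s ×ˢ closedBall x'' (s * (‖x'‖ + s))` of radii `s = r / 8` and `s = 2 r`: the
second coordinate is seen at scale `r²` when `‖x'‖ ≲ r` and at scale `r ‖x'‖` when `‖x'‖ ≳ r`.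
The box of radius `s` has volume proportional to `s ^ d₁ * (s * (‖x'‖ + s)) ^ d₂`, which is
multiplied by at most `c ^ (d₁ + 2 d₂)` when `s` is replaced by `c s` with `c ≥ 1`. -/

open MeasureTheory

/-- The Grushin quasi-distance on `ℝ^{d₁} × ℝ^{d₂}`. -/
noncomputable def grushinDist {d₁ d₂ : ℕ}
    (x y : EuclideanSpace ℝ (Fin d₁) × EuclideanSpace ℝ (Fin d₂)) : ℝ :=
  if Real.sqrt ‖x.2 - y.2‖ ≤ ‖x.1‖ + ‖y.1‖ then
    ‖x.1 - y.1‖ + ‖x.2 - y.2‖ / (‖x.1‖ + ‖y.1‖)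
  else
    ‖x.1 - y.1‖ + Real.sqrt ‖x.2 - y.2‖

/-- The closed Grushin ball `B^ϱ(x, r) = {y : ϱ(x, y) ≤ r}`. -/
def grushinBall {d₁ d₂ : ℕ}
    (x : EuclideanSpace ℝ (Fin d₁) × EuclideanSpace ℝ (Fin d₂)) (r : ℝ) :
    Set (EuclideanSpace ℝ (Fin d₁) × EuclideanSpace ℝ (Fin d₂)) :=
  {y | grushinDist x y ≤ r}

open Metric

section GrushinDist

variable {d₁ d₂ : ℕ} (x y : EuclideanSpace ℝ (Fin d₁) × EuclideanSpace ℝ (Fin d₂))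

lemma norm_fst_sub_le_grushinDist : ‖x.1 - y.1‖ ≤ grushinDist x y := by
  unfold grushinDist
  split_ifs <;> exact le_add_of_nonneg_right (by positivity)

lemma norm_snd_sub_le_grushinDist :
    ‖x.2 - y.2‖ ≤ grushinDist x y * (2 * ‖x.1‖ + grushinDist x y) := by
  have hy₁ : ‖y.1‖ ≤ ‖x.1‖ + ‖x.1 - y.1‖ := by
    simpa [norm_sub_rev] using norm_le_norm_add_norm_sub' y.1 x.1
  unfold grushinDist
  split_ifs with h
  · have hb : ‖x.2 - y.2‖ = ‖x.2 - y.2‖ / (‖x.1‖ + ‖y.1‖) * (‖x.1‖ + ‖y.1‖) := by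
      rcases eq_or_ne (‖x.1‖ + ‖y.1‖) 0 with hs | hs
      · rw [hs] at h
        simp [norm_le_zero_iff.mp (Real.sqrt_eq_zero'.mp (h.antisymm (Real.sqrt_nonneg _)))]
      · rw [div_mul_cancel₀ _ hs]
    have : 0 ≤ ‖x.2 - y.2‖ / (‖x.1‖ + ‖y.1‖) := by positivity
    nlinarith [norm_nonneg x.1, norm_nonneg (x.1 - y.1)]
  · have := Real.sq_sqrt (norm_nonneg (x.2 - y.2))
    nlinarith [norm_nonneg x.1, norm_nonneg (x.1 - y.1), Real.sqrt_nonneg ‖x.2 - y.2‖]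

lemma grushinDist_le_add_sqrt : grushinDist x y ≤ ‖x.1 - y.1‖ + √‖x.2 - y.2‖ := by
  unfold grushinDist
  split_ifs with h
  · gcongr
    rcases (Real.sqrt_nonneg ‖x.2 - y.2‖).eq_or_lt with h0 | h0
    · rw [eq_comm, Real.sqrt_eq_zero', norm_le_zero_iff] at h0
      simp [h0]
    · calc ‖x.2 - y.2‖ / (‖x.1‖ + ‖y.1‖) ≤ ‖x.2 - y.2‖ / √‖x.2 - y.2‖ := by gcongr
        _ = √‖x.2 - y.2‖ := Real.div_sqrt
  · rfl

lemma norm_fst_mul_sub_le_norm_snd_sub :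
    ‖x.1‖ * (grushinDist x y - ‖x.1 - y.1‖) ≤ ‖x.2 - y.2‖ := by
  have hA : ‖x.1‖ ≤ ‖x.1‖ + ‖y.1‖ := le_add_of_nonneg_right (norm_nonneg _)
  unfold grushinDist
  split_ifs with h
  · rw [add_sub_cancel_left]
    rcases eq_or_ne (‖x.1‖ + ‖y.1‖) 0 with hs | hs
    · simp [hs]
    · calc ‖x.1‖ * (‖x.2 - y.2‖ / (‖x.1‖ + ‖y.1‖))
          ≤ (‖x.1‖ + ‖y.1‖) * (‖x.2 - y.2‖ / (‖x.1‖ + ‖y.1‖)) := by gcongr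
        _ = ‖x.2 - y.2‖ := mul_div_cancel₀ _ hs
  · rw [add_sub_cancel_left]
    calc ‖x.1‖ * √‖x.2 - y.2‖ ≤ √‖x.2 - y.2‖ * √‖x.2 - y.2‖ := by gcongr; linarith
      _ = ‖x.2 - y.2‖ := Real.mul_self_sqrt (norm_nonneg _)

end GrushinDist

section GrushinBox

variable {d₁ d₂ : ℕ} (x : EuclideanSpace ℝ (Fin d₁) × EuclideanSpace ℝ (Fin d₂))

def grushinBox (s : ℝ) : Set (EuclideanSpace ℝ (Fin d₁) × EuclideanSpace ℝ (Fin d₂)) :=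
  closedBall x.1 s ×ˢ closedBall x.2 (s * (‖x.1‖ + s))

lemma grushinBall_mono {r R : ℝ} (h : r ≤ R) : grushinBall x r ⊆ grushinBall x R :=
  fun _ hy ↦ le_trans hy h

lemma grushinBall_subset_grushinBox {R : ℝ} (hR : 0 ≤ R) :
    grushinBall x R ⊆ grushinBox x (2 * R) := by
  intro y (hy : grushinDist x y ≤ R)
  have hρ₀ := (norm_nonneg _).trans (norm_fst_sub_le_grushinDist x y)
  have hΔ₂ : ‖x.2 - y.2‖ ≤ R * (2 * ‖x.1‖ + R) :=
    (norm_snd_sub_le_grushinDist x y).trans (by gcongr)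
  rw [grushinBox, Set.mem_prod, mem_closedBall', mem_closedBall', dist_eq_norm, dist_eq_norm]
  constructor <;> nlinarith [norm_fst_sub_le_grushinDist x y, norm_nonneg x.1]

lemma grushinBox_subset_grushinBall {r : ℝ} (hr : 0 ≤ r) :
    grushinBox x (r / 8) ⊆ grushinBall x r := by
  rintro y ⟨hy₁, hy₂⟩
  rw [mem_closedBall', dist_eq_norm] at hy₁ hy₂
  show grushinDist x y ≤ r
  by_cases hA : ‖x.1‖ ≤ r
  · have hsqrt : √‖x.2 - y.2‖ ≤ r / 2 :=
      Real.sqrt_le_iff.mpr ⟨by positivity, by nlinarith⟩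
    linarith [grushinDist_le_add_sqrt x y]
  · push Not at hA
    nlinarith [norm_fst_mul_sub_le_norm_snd_sub x y]

lemma volume_grushinBox {s : ℝ} (hs : 0 ≤ s) :
    volume (grushinBox x s) = ENNReal.ofReal (s ^ d₁ * (s * (‖x.1‖ + s)) ^ d₂) *
      (volume (ball (0 : EuclideanSpace ℝ (Fin d₁)) 1) *
        volume (ball (0 : EuclideanSpace ℝ (Fin d₂)) 1)) := by
  rw [grushinBox, Measure.volume_eq_prod, Measure.prod_prod,
    Measure.addHaar_closedBall _ _ hs, Measure.addHaar_closedBall _ _ (by positivity),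
    finrank_euclideanSpace_fin, finrank_euclideanSpace_fin, ENNReal.ofReal_mul (by positivity)]
  ring

lemma volume_grushinBox_mul_le {s c : ℝ} (hs : 0 ≤ s) (hc : 1 ≤ c) :
    volume (grushinBox x (c * s)) ≤
      ENNReal.ofReal (c ^ (d₁ + 2 * d₂)) * volume (grushinBox x s) := by
  have hc₀ : 0 ≤ c := zero_le_one.trans hc
  have hradius : c * s * (‖x.1‖ + c * s) ≤ c ^ 2 * (s * (‖x.1‖ + s)) := by
    nlinarith [mul_nonneg (mul_nonneg hc₀ hs) (norm_nonneg x.1)]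
  have hvol : (c * s) ^ d₁ * (c * s * (‖x.1‖ + c * s)) ^ d₂ ≤
      c ^ (d₁ + 2 * d₂) * (s ^ d₁ * (s * (‖x.1‖ + s)) ^ d₂) :=
    calc (c * s) ^ d₁ * (c * s * (‖x.1‖ + c * s)) ^ d₂
        ≤ (c * s) ^ d₁ * (c ^ 2 * (s * (‖x.1‖ + s))) ^ d₂ := by gcongr
      _ = c ^ (d₁ + 2 * d₂) * (s ^ d₁ * (s * (‖x.1‖ + s)) ^ d₂) := by
          simp only [mul_pow, pow_add, pow_mul]; ring
  rw [volume_grushinBox x (by positivity), volume_grushinBox x hs,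
    ← mul_assoc (ENNReal.ofReal _) (ENNReal.ofReal _), ← ENNReal.ofReal_mul (by positivity)]
  gcongr

end GrushinBox

theorem grushinBall_doubling_general (d₁ d₂ : ℕ) :
    ∃ C : ℝ, 0 < C ∧
      ∀ (x : EuclideanSpace ℝ (Fin d₁) × EuclideanSpace ℝ (Fin d₂)) (r κ : ℝ),
        0 < r → 0 ≤ κ →
        volume (grushinBall x (κ * r)) ≤
          ENNReal.ofReal (C * (1 + κ) ^ (d₁ + 2 * d₂)) * volume (grushinBall x r) := by
  refine ⟨16 ^ (d₁ + 2 * d₂), by positivity, fun x r κ hr hκ ↦ ?_⟩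
  have hball : grushinBall x (κ * r) ⊆ grushinBox x (16 * (1 + κ) * (r / 8)) :=
    calc grushinBall x (κ * r) ⊆ grushinBall x ((1 + κ) * r) := grushinBall_mono x (by nlinarith)
      _ ⊆ grushinBox x (2 * ((1 + κ) * r)) := grushinBall_subset_grushinBox x (by positivity)
      _ = grushinBox x (16 * (1 + κ) * (r / 8)) := by ring_nf
  calc volume (grushinBall x (κ * r))
      ≤ volume (grushinBox x (16 * (1 + κ) * (r / 8))) := measure_mono hball
    _ ≤ ENNReal.ofReal ((16 * (1 + κ)) ^ (d₁ + 2 * d₂)) * volume (grushinBox x (r / 8)) :=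
        volume_grushinBox_mul_le x (by positivity) (by linarith)
    _ ≤ ENNReal.ofReal (16 ^ (d₁ + 2 * d₂) * (1 + κ) ^ (d₁ + 2 * d₂)) *
          volume (grushinBall x r) := by
        rw [mul_pow]
        gcongr
        exact grushinBox_subset_grushinBall x hr.le

/-- Doubling property of Grushin balls: `|B^ϱ(x, κ r)| ≤ C (1 + κ)^Q |B^ϱ(x, r)|`
with `Q = d₁ + 2 d₂`, for a constant `C` depending only on `d₁, d₂`. -/
theorem grushinBall_doubling (d₁ d₂ : ℕ) (hd₁ : 1 ≤ d₁) (hd₂ : 1 ≤ d₂) :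
    ∃ C : ℝ, 0 < C ∧
      ∀ (x : EuclideanSpace ℝ (Fin d₁) × EuclideanSpace ℝ (Fin d₂)) (r κ : ℝ),
        0 < r → 0 ≤ κ →
        volume (grushinBall x (κ * r)) ≤
          ENNReal.ofReal (C * (1 + κ) ^ (d₁ + 2 * d₂)) * volume (grushinBall x r) :=
  grushinBall_doubling_general d₁ d₂
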